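/- Let S ⊆ ℝᵈ be the linear span of vectors u₀⁽¹⁾,…,u₀⁽ᴶ⁾. Suppose u: [0,T] → (ℝᵈ)ᴶ is differentiable (pathwise, for a fixed realization) and each particle satisfies duₜ⁽ʲ⁾/dt = (1/J)∑ₖ αⱼₖ(t)(uₜ⁽ᵏ⁾ - ūₜ) for scalar coefficients αⱼₖ(t) continuous in t, with uₜ⁽ʲ⁾|_{t=0} = u₀⁽ʲ⁾. Then uₜ⁽ʲ⁾ ∈ S for all t ∈ [0,T] and all j. -/

import Mathlib

/-!
A vector lies in `S` iff every linear functional vanishing on `S` vanishes on it. Applying such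
a functional `φ` to each particle turns the ensemble into a real-valued system obeying the same
drift equation, which is linear with continuous coefficients; its initial value is `0`, so by
Grönwall's inequality it stays `0`.
-/

open Set

section EnsembleDrift

variable {E F : Type*} [NormedAddCommGroup E] [NormedSpace ℝ E]
  [NormedAddCommGroup F] [NormedSpace ℝ F] {J : ℕ}

noncomputable def ensembleDrift (α : Fin J → Fin J → ℝ) : (Fin J → E) →L[ℝ] (Fin J → E) :=
  ContinuousLinearMap.pi fun j => (J : ℝ)⁻¹ • ∑ k, α j k •
    (ContinuousLinearMap.proj k - (J : ℝ)⁻¹ • ∑ i, ContinuousLinearMap.proj i)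

theorem ensembleDrift_apply (α : Fin J → Fin J → ℝ) (U : Fin J → E) (j : Fin J) :
    ensembleDrift α U j = (J : ℝ)⁻¹ • ∑ k, α j k • (U k - (J : ℝ)⁻¹ • ∑ i, U i) := by
  simp [ensembleDrift]

theorem ensembleDrift_map (φ : E →L[ℝ] F) (α : Fin J → Fin J → ℝ) (U : Fin J → E) :
    ensembleDrift α (fun k => φ (U k)) = fun j => φ (ensembleDrift α U j) := by
  funext j
  simp only [ensembleDrift_apply, map_smul, map_sum, map_sub]

theorem continuous_ensembleDrift [FiniteDimensional ℝ E] :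
    Continuous (ensembleDrift : (Fin J → Fin J → ℝ) → (Fin J → E) →L[ℝ] (Fin J → E)) := by
  refine continuous_clm_apply.2 fun U => continuous_pi fun j => ?_
  simp only [ensembleDrift_apply]
  fun_prop

end EnsembleDrift

theorem eq_zero_of_hasDerivAt_clm_apply_self {E : Type*} [NormedAddCommGroup E]
    [NormedSpace ℝ E] {A : ℝ → E →L[ℝ] E} {g : ℝ → E} {a b : ℝ}
    (hA : ContinuousOn A (Icc a b)) (hg : ∀ t ∈ Icc a b, HasDerivAt g (A t (g t)) t)
    (ha : g a = 0) : ∀ t ∈ Icc a b, g t = 0 := by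
  obtain ⟨K, hK⟩ := isCompact_Icc.exists_bound_of_continuousOn hA
  exact eq_zero_of_abs_deriv_le_mul_abs_self_of_eq_zero_right
    (fun t ht => (hg t ht).continuousAt.continuousWithinAt)
    (fun t ht => (hg t (Ico_subset_Icc_self ht)).hasDerivWithinAt) ha
    fun t ht => (A t).le_of_opNorm_le (hK t (Ico_subset_Icc_self ht)) (g t)

theorem eki_subspace_property_general
    {d J : ℕ} (T : ℝ)
    (u₀ : Fin J → (Fin d → ℝ))
    (S : Submodule ℝ (Fin d → ℝ)) (hS : S = Submodule.span ℝ (Set.range u₀))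
    (u : ℝ → Fin J → (Fin d → ℝ))
    (α : Fin J → Fin J → ℝ → ℝ) (hα : ∀ j k, Continuous (α j k))
    (hderiv : ∀ (j : Fin J), ∀ t ∈ Set.Icc (0 : ℝ) T,
      HasDerivAt (fun s => u s j)
        ((J : ℝ)⁻¹ • ∑ k, α j k t • (u t k - (J : ℝ)⁻¹ • ∑ i, u t i)) t)
    (hinit : ∀ j, u 0 j = u₀ j) :
    ∀ t ∈ Set.Icc (0 : ℝ) T, ∀ j, u t j ∈ S := by
  intro t ht j
  rw [← Subspace.dualAnnihilator_dualCoannihilator_eq (W := S), Submodule.mem_dualCoannihilator]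
  intro f hf
  rw [Submodule.mem_dualAnnihilator] at hf
  let φ := LinearMap.toContinuousLinearMap f
  have hdrift : ContinuousOn (fun s => (ensembleDrift fun j k => α j k s : (Fin J → ℝ) →L[ℝ] _))
      (Icc 0 T) :=
    (continuous_ensembleDrift.comp (by fun_prop)).continuousOn
  have hφu : ∀ s ∈ Icc 0 T, HasDerivAt (fun s k => φ (u s k))
      (ensembleDrift (fun j k => α j k s) fun k => φ (u s k)) s := by
    intro s hs
    rw [ensembleDrift_map]
    refine hasDerivAt_pi.2 fun k => φ.hasFDerivAt.comp_hasDerivAt s ?_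
    exact (hderiv k s hs).congr_deriv (ensembleDrift_apply (fun j k => α j k s) (u s) k).symm
  have hφu₀ : (fun k => φ (u 0 k)) = 0 := by
    funext k
    exact hf _ (hS ▸ hinit k ▸ Submodule.subset_span ⟨k, rfl⟩)
  exact congrFun (eq_zero_of_hasDerivAt_clm_apply_self hdrift hφu hφu₀ t ht) j

/-- Subspace property of (the drift part of) ensemble Kalman inversion:
if each particle satisfies `duₜ⁽ʲ⁾/dt = (1/J) ∑ₖ αⱼₖ(t)(uₜ⁽ᵏ⁾ - ūₜ)` on `[0,T]` with
continuous scalar coefficients and initial values `u₀⁽ʲ⁾`, then every particle stays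
in the linear span `S` of the initial ensemble. -/
theorem eki_subspace_property
    {d J : ℕ} (hJ : 0 < J) (T : ℝ) (hT : 0 ≤ T)
    (u₀ : Fin J → (Fin d → ℝ))
    (S : Submodule ℝ (Fin d → ℝ)) (hS : S = Submodule.span ℝ (Set.range u₀))
    (u : ℝ → Fin J → (Fin d → ℝ))
    (α : Fin J → Fin J → ℝ → ℝ) (hα : ∀ j k, Continuous (α j k))
    (hderiv : ∀ (j : Fin J), ∀ t ∈ Set.Icc (0 : ℝ) T,
      HasDerivAt (fun s => u s j)
        ((J : ℝ)⁻¹ • ∑ k, α j k t • (u t k - (J : ℝ)⁻¹ • ∑ i, u t i)) t)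
    (hinit : ∀ j, u 0 j = u₀ j) :
    ∀ t ∈ Set.Icc (0 : ℝ) T, ∀ j, u t j ∈ S :=
  eki_subspace_property_general T u₀ S hS u α hα hderiv hinit
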